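/- Let G be a triangle-free graph of diameter 2 such that every pair of non-adjacent vertices has exactly one common neighbour, and let S be a mutual-visibility set of size s. Then C(s,2) − e(S) = Σ_{w ∈ V(G)\S} C(|N(w) ∩ S|, 2). -/

import Mathlib

/-!
The non-edges of `G[S]` are partitioned according to the common neighbour of their two ends.
Two non-adjacent vertices of `S` are at distance 2, so mutual visibility puts a common neighbour
outside `S`, and by hypothesis it is the only one. Conversely, by triangle-freeness any two
neighbours `u ≠ v ∈ S` of a vertex `w ∉ S` are non-adjacent, so the class of `w` consists of
exactly `C(|N(w) ∩ S|, 2)` pairs. The edges of `G[S]` make up the remaining pairs of `S`.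
-/

open scoped Classical

def SimpleGraph.MutualVisibilitySet {V : Type*} (G : SimpleGraph V) (S : Set V) : Prop :=
  ∀ u ∈ S, ∀ v ∈ S, ∃ p : G.Walk u v, p.length = G.dist u v ∧
    ∀ w ∈ p.support, w ∈ S → w = u ∨ w = v

noncomputable def edgesWithin {V : Type*} (G : SimpleGraph V) (S : Set V) : ℕ :=
  {e ∈ G.edgeSet | ∀ v ∈ e, v ∈ S}.ncard

open Finset

theorem Finset.card_filter_sym2_not_isDiag {α : Type*} [DecidableEq α] (s : Finset α) :
    #{e ∈ s.sym2 | ¬e.IsDiag} = (#s).choose 2 := by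
  rw [sym2_eq_image, Sym2.filter_image_mk_not_isDiag, Sym2.card_image_offDiag]

namespace SimpleGraph

variable {V : Type*} {G : SimpleGraph V} {u v w : V}

theorem CliqueFree.not_adj_of_adj_of_adj (htf : G.CliqueFree 3) (hu : G.Adj w u)
    (hv : G.Adj w v) : ¬G.Adj u v :=
  fun huv => htf {w, u, v} (is3Clique_triple_iff.mpr ⟨hu, hv, huv⟩)

theorem dist_eq_two_of_adj_of_adj (hne : u ≠ v) (hnadj : ¬G.Adj u v) (huw : G.Adj u w)
    (hwv : G.Adj w v) : G.dist u v = 2 := by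
  have : G.edist u v = 2 :=
    edist_eq_two_iff.mpr ⟨hne, hnadj, w, (G.mem_commonNeighbors).mpr ⟨huw, hwv.symm⟩⟩
  simp [dist, this]

theorem MutualVisibilitySet.exists_adj_adj_notMem {S : Set V} (hS : G.MutualVisibilitySet S)
    (hu : u ∈ S) (hv : v ∈ S) (hdist : G.dist u v = 2) :
    ∃ w ∉ S, G.Adj u w ∧ G.Adj w v := by
  obtain ⟨p, hlen, hvis⟩ := hS u hu v hv
  rw [hdist] at hlen
  have huw : G.Adj u (p.getVert 1) := by
    simpa using p.adj_getVert_succ (i := 0) (by omega)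
  have hwv : G.Adj (p.getVert 1) v := by
    simpa [← hlen] using p.adj_getVert_succ (i := 1) (by omega)
  refine ⟨p.getVert 1, fun hw => ?_, huw, hwv⟩
  rcases hvis _ (p.getVert_mem_support 1) hw with h | h
  · exact huw.ne h.symm
  · exact hwv.ne h

variable (G)

theorem edgesWithin_eq_card_filter_sym2 [DecidableRel G.Adj] (S : Finset V) :
    edgesWithin G S = #{e ∈ S.sym2 | e ∈ G.edgeSet} := by
  rw [edgesWithin, ← Set.ncard_coe_finset]
  congr 1
  ext e
  simp [mem_sym2_iff, and_comm]

theorem edgesWithin_add_edgesWithin_compl [DecidableEq V] (S : Finset V) :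
    edgesWithin G S + edgesWithin Gᶜ S = (#S).choose 2 := by
  rw [edgesWithin_eq_card_filter_sym2, edgesWithin_eq_card_filter_sym2,
    ← card_filter_sym2_not_isDiag, ← card_union_of_disjoint]
  · congr 1
    ext e
    induction e using Sym2.inductionOn with
    | hf a b =>
      have : G.Adj a b → a ≠ b := Adj.ne
      simp only [mem_union, mem_filter, mk_mem_sym2_iff, mem_edgeSet, compl_adj,
        Sym2.mk_isDiag_iff]
      tauto
  · refine Finset.disjoint_left.mpr fun e he hce => ?_
    induction e using Sym2.inductionOn with
    | hf a b =>
      simp only [mem_filter, mem_edgeSet, compl_adj] at he hce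
      exact hce.2.2 he.2

variable {G}

theorem filter_sym2_compl_edgeSet_eq_biUnion [Fintype V] [DecidableEq V] (htf : G.CliqueFree 3)
    (hcn : ∀ u v, u ≠ v → ¬G.Adj u v → ∃ w, G.Adj u w ∧ G.Adj w v) {S : Finset V}
    (hS : G.MutualVisibilitySet S) :
    {e ∈ S.sym2 | e ∈ Gᶜ.edgeSet} =
      Sᶜ.biUnion fun w => {e ∈ {u ∈ S | G.Adj w u}.sym2 | ¬e.IsDiag} := by
  ext e
  induction e using Sym2.inductionOn with
  | hf a b =>
    simp only [mem_filter, mk_mem_sym2_iff, mem_edgeSet, compl_adj, mem_biUnion, mem_compl,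
      Sym2.mk_isDiag_iff]
    constructor
    · rintro ⟨⟨ha, hb⟩, hne, hnadj⟩
      obtain ⟨c, hac, hcb⟩ := hcn a b hne hnadj
      obtain ⟨w, hw, haw, hwb⟩ := hS.exists_adj_adj_notMem (mem_coe.mpr ha) (mem_coe.mpr hb)
        (dist_eq_two_of_adj_of_adj hne hnadj hac hcb)
      exact ⟨w, hw, ⟨⟨ha, haw.symm⟩, hb, hwb⟩, hne⟩
    · rintro ⟨w, -, ⟨⟨ha, hwa⟩, hb, hwb⟩, hne⟩
      exact ⟨⟨ha, hb⟩, hne, htf.not_adj_of_adj_of_adj hwa hwb⟩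

theorem pairwiseDisjoint_sym2_neighbors [DecidableEq V] (htf : G.CliqueFree 3)
    (huniq : ∀ u v, u ≠ v → ¬G.Adj u v → ∃! w, G.Adj u w ∧ G.Adj w v) (S T : Finset V) :
    (T : Set V).PairwiseDisjoint fun w => {e ∈ {u ∈ S | G.Adj w u}.sym2 | ¬e.IsDiag} := by
  intro w _ w' _ hww'
  rw [Function.onFun, Finset.disjoint_left]
  intro e he he'
  apply hww'
  induction e using Sym2.inductionOn with
  | hf a b =>
    simp only [mem_filter, mk_mem_sym2_iff, Sym2.mk_isDiag_iff] at he he'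
    obtain ⟨⟨⟨-, hwa⟩, -, hwb⟩, hne⟩ := he
    obtain ⟨⟨⟨-, hwa'⟩, -, hwb'⟩, -⟩ := he'
    exact (huniq a b hne (htf.not_adj_of_adj_of_adj hwa hwb)).unique
      ⟨hwa.symm, hwb⟩ ⟨hwa'.symm, hwb'⟩

theorem edgesWithin_compl_eq_sum_choose_two [Fintype V] [DecidableEq V] (htf : G.CliqueFree 3)
    (huniq : ∀ u v, u ≠ v → ¬G.Adj u v → ∃! w, G.Adj u w ∧ G.Adj w v) {S : Finset V}
    (hS : G.MutualVisibilitySet S) :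
    edgesWithin Gᶜ S = ∑ w ∈ Sᶜ, (#{u ∈ S | G.Adj w u}).choose 2 := by
  rw [edgesWithin_eq_card_filter_sym2,
    filter_sym2_compl_edgeSet_eq_biUnion htf (fun u v hne hnadj => (huniq u v hne hnadj).exists) hS,
    card_biUnion (pairwiseDisjoint_sym2_neighbors htf huniq S Sᶜ)]
  exact sum_congr rfl fun w _ => card_filter_sym2_not_isDiag _

end SimpleGraph

theorem stmt2_general {V : Type*} [Fintype V] [DecidableEq V] (G : SimpleGraph V)
    (htf : G.CliqueFree 3)
    (huniq : ∀ u v : V, u ≠ v → ¬ G.Adj u v → ∃! w, G.Adj u w ∧ G.Adj w v)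
    (S : Finset V) (hS : G.MutualVisibilitySet ↑S) :
    S.card.choose 2 - edgesWithin G ↑S =
      ∑ w ∈ Sᶜ, ({u ∈ (S : Set V) | G.Adj w u}.ncard).choose 2 := by
  have hsplit := G.edgesWithin_add_edgesWithin_compl S
  rw [SimpleGraph.edgesWithin_compl_eq_sum_choose_two htf huniq hS] at hsplit
  have hncard (w : V) : {u ∈ (S : Set V) | G.Adj w u}.ncard = #{u ∈ S | G.Adj w u} := by
    rw [← Set.ncard_coe_finset]
    congr 1
    ext
    simp
  simp only [hncard]
  omega

theorem stmt2 {V : Type*} [Fintype V] [DecidableEq V] (G : SimpleGraph V)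
    (htf : G.CliqueFree 3) (hdiam : G.diam = 2)
    (huniq : ∀ u v : V, u ≠ v → ¬ G.Adj u v → ∃! w, G.Adj u w ∧ G.Adj w v)
    (S : Finset V) (hS : G.MutualVisibilitySet ↑S) :
    S.card.choose 2 - edgesWithin G ↑S =
      ∑ w ∈ Sᶜ, ({u ∈ (S : Set V) | G.Adj w u}.ncard).choose 2 :=
  stmt2_general G htf huniq S hS
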